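/- arXiv:1612.06103 — 4 statements merged into one kernel-verified Lean document; each statement's English description precedes it below -/
import Mathlib

section
/- Let λ be a symplectic partition of 2n all of whose nonzero terms are even (padded with zeros), and let τ : Jord_bp(λ) ∪ {0} → ℤ/2ℤ satisfy τ(0) = 0 and τ(i) = 0 whenever mult_λ(i) = 1. Then, with the d-linking equivalence relations defined below: (i) for each d ∈ {1,2} the set 𝔍nt_d of d-equivalence classes with at least two elements is finite, 𝔍nt_1 contains exactly one infinite class, and every class in 𝔍nt_2 is finite; (ii) every class in 𝔍nt_d has odd minimum, and its maximum is even or infinite; (iii) for every k ≥ 1 there is at least one d ∈ {1,2} and a class in 𝔍nt_d containing both 2k−1 and 2k, and both values of d have this property if and only if λ_{2k−1} > λ_{2k}; (iv) for every k ≥ 1 there is at most one d ∈ {1,2} such that some class in 𝔍nt_d contains both 2k and 2k+1. -/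
open Classical

namespace Wald

/-- `S f k = λ_1 + … + λ_k` (partitions are indexed from 1; index 0 is unused). -/
def S (f : ℕ → ℕ) (k : ℕ) : ℕ := ∑ j ∈ Finset.Icc 1 k, f j

/-- `f` represents a partition of `N`: nonincreasing on indices `≥ 1`,
finitely many nonzero terms, with total sum `N`. -/
structure IsPartition (f : ℕ → ℕ) (N : ℕ) : Prop where
  mono : ∀ ⦃j k : ℕ⦄, 1 ≤ j → j ≤ k → f k ≤ f j
  fin : ∃ m, ∀ j, m < j → f j = 0
  total : ∀ m, (∀ j, m < j → f j = 0) → S f m = N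

/-- multiplicity of `i` as a term of the partition -/
noncomputable def mult (f : ℕ → ℕ) (i : ℕ) : ℕ := Set.ncard {j : ℕ | 1 ≤ j ∧ f j = i}

/-- dominance order: `Dom f g ↔ f ≤ g` -/
def Dom (f g : ℕ → ℕ) : Prop := ∀ k, S f k ≤ S g k

/-- transposed partition: `(transpose f) j = #{i ≥ 1 : f i ≥ j}` for `j ≥ 1` -/
noncomputable def transpose (f : ℕ → ℕ) : ℕ → ℕ :=
  fun j => Set.ncard {i : ℕ | 1 ≤ i ∧ 1 ≤ j ∧ j ≤ f i}

/-- union of two partitions (all terms listed together in nonincreasing order);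
it is characterized by `transpose (unionP f g) = transpose f + transpose g`. -/
noncomputable def unionP (f g : ℕ → ℕ) : ℕ → ℕ :=
  transpose (fun j => transpose f j + transpose g j)

/-- the partition `(1)` -/
def one1 : ℕ → ℕ := fun j => if j = 1 then 1 else 0

/-- symplectic partition: every odd `i ≥ 1` has even multiplicity -/
def Symp (f : ℕ → ℕ) : Prop := ∀ i, Odd i → Even (mult f i)

/-- orthogonal partition: every even `i ≥ 2` has even multiplicity -/
def Orth (f : ℕ → ℕ) : Prop := ∀ i, Even i → 1 ≤ i → Even (mult f i)

/-- `λ_{2j-1} ≡ λ_{2j} (mod 2)` for all `j ≥ 1` (speciality for symplectic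
partitions of `2n` and orthogonal partitions of `2n`). -/
def SpecialPairs (f : ℕ → ℕ) : Prop := ∀ j, 1 ≤ j → f (2*j - 1) % 2 = f (2*j) % 2

/-- speciality for orthogonal partitions of `2n+1`: `λ_1` odd and
`λ_{2j} ≡ λ_{2j+1} (mod 2)` for all `j ≥ 1`. -/
def SpecialOrthOdd (f : ℕ → ℕ) : Prop :=
  Odd (f 1) ∧ ∀ j, 1 ≤ j → f (2*j) % 2 = f (2*j + 1) % 2

/-- `Jord_bp` for symplectic partitions: even `i ≥ 2` with positive multiplicity -/
def JordbpS (f : ℕ → ℕ) : Set ℕ := {i | Even i ∧ 2 ≤ i ∧ 1 ≤ mult f i}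

/-- `Jord_bp` for orthogonal partitions: odd `i ≥ 1` with positive multiplicity -/
def JordbpO (f : ℕ → ℕ) : Set ℕ := {i | Odd i ∧ 1 ≤ mult f i}

/-- the set `{i_1 > … > i_m}` of terms with odd multiplicity -/
def OddSet (f : ℕ → ℕ) : Set ℕ := {i | Odd (mult f i)}

/-- for special symplectic partitions: `{i_1 > … > i_{m'}}`, with `0` added if `m` is odd -/
def Dsymp (f : ℕ → ℕ) : Set ℕ :=
  {i | Odd (mult f i) ∨ (i = 0 ∧ Odd (OddSet f).ncard)}

/-- `a = i_{2h-1}` and `b = i_{2h}` for some `h`: consecutive elements of `Dsymp f`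
with an even number of elements of `Dsymp f` above `a`. -/
def PairedS (f : ℕ → ℕ) (a b : ℕ) : Prop :=
  b < a ∧ a ∈ Dsymp f ∧ b ∈ Dsymp f ∧ Even ((Dsymp f ∩ Set.Ioi a).ncard) ∧
    Dsymp f ∩ Set.Ioo b a = ∅

/-- intervals of a special symplectic partition of `2n` -/
def IsIntervalS (f : ℕ → ℕ) (Δ : Set ℕ) : Prop :=
  (∃ a b, PairedS f a b ∧ Δ = {i | (i = 0 ∨ 1 ≤ mult f i) ∧ b ≤ i ∧ i ≤ a}) ∨
  (∃ i, Even i ∧ (i = 0 ∨ (2 ≤ i ∧ 1 ≤ mult f i)) ∧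
    (¬ ∃ a b, PairedS f a b ∧ b ≤ i ∧ i ≤ a) ∧ Δ = {i})

/-- `a = i_{2h-1}` and `b = i_{2h}` for some `h` (orthogonal partitions of `2n`) -/
def PairedOE (f : ℕ → ℕ) (a b : ℕ) : Prop :=
  b < a ∧ a ∈ OddSet f ∧ b ∈ OddSet f ∧ Even ((OddSet f ∩ Set.Ioi a).ncard) ∧
    OddSet f ∩ Set.Ioo b a = ∅

/-- intervals of a special orthogonal partition of `2n` -/
def IsIntervalOE (f : ℕ → ℕ) (Δ : Set ℕ) : Prop :=
  (∃ a b, PairedOE f a b ∧ Δ = {i | 1 ≤ mult f i ∧ b ≤ i ∧ i ≤ a}) ∨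
  (∃ i, Odd i ∧ 1 ≤ mult f i ∧ (¬ ∃ a b, PairedOE f a b ∧ b ≤ i ∧ i ≤ a) ∧ Δ = {i})

/-- `a = i_{2h}` and `b = i_{2h+1}` for some `h ≥ 1` (orthogonal partitions of `2n+1`) -/
def PairedOO (f : ℕ → ℕ) (a b : ℕ) : Prop :=
  b < a ∧ a ∈ OddSet f ∧ b ∈ OddSet f ∧ Odd ((OddSet f ∩ Set.Ioi a).ncard) ∧
    OddSet f ∩ Set.Ioo b a = ∅

/-- intervals of a special orthogonal partition of `2n+1` (convention `i_0 = ∞`) -/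
def IsIntervalOO (f : ℕ → ℕ) (Δ : Set ℕ) : Prop :=
  (∃ b, b ∈ OddSet f ∧ OddSet f ∩ Set.Ioi b = ∅ ∧ Δ = {i | 1 ≤ mult f i ∧ b ≤ i}) ∨
  (∃ a b, PairedOO f a b ∧ Δ = {i | 1 ≤ mult f i ∧ b ≤ i ∧ i ≤ a}) ∨
  (∃ i, Odd i ∧ 1 ≤ mult f i ∧
    (¬ ((∃ b, b ∈ OddSet f ∧ OddSet f ∩ Set.Ioi b = ∅ ∧ b ≤ i) ∨
        (∃ a b, PairedOO f a b ∧ b ≤ i ∧ i ≤ a))) ∧ Δ = {i})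

/-- `J(Δ) = {j ≥ 1 : λ_j ∈ Δ}` -/
def Jset (f : ℕ → ℕ) (Δ : Set ℕ) : Set ℕ := {j | 1 ≤ j ∧ f j ∈ Δ}

/-- `ζ(λ)` for a special symplectic partition (`j_max(Δ_min) = ∞`, so the smallest
interval contributes no `-1`: its `J`-set has no greatest element). -/
noncomputable def zetaS (f : ℕ → ℕ) : ℕ → ℤ := fun j =>
  if ∃ Δ, IsIntervalS f Δ ∧ IsLeast (Jset f Δ) j then 1
  else if ∃ Δ, IsIntervalS f Δ ∧ IsGreatest (Jset f Δ) j then -1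
  else 0

/-- `ζ(λ)` for a special orthogonal partition of `2n` -/
noncomputable def zetaOE (f : ℕ → ℕ) : ℕ → ℤ := fun j =>
  if ∃ Δ, IsIntervalOE f Δ ∧ IsLeast (Jset f Δ) j then 1
  else if ∃ Δ, IsIntervalOE f Δ ∧ IsGreatest (Jset f Δ) j then -1
  else 0

/-- `J^+` for `λ1` special symplectic and `λ2` special orthogonal (of `2n2`) -/
def JplusSet (f1 f2 : ℕ → ℕ) : Set ℕ :=
  {j | 1 ≤ j ∧ Even (f1 j) ∧ Odd (f2 j) ∧
    ((∃ Δ, IsIntervalS f1 Δ ∧ IsLeast (Jset f1 Δ) j) ∨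
     (∃ Δ, IsIntervalOE f2 Δ ∧ IsLeast (Jset f2 Δ) j))}

/-- `J^-` -/
def JminusSet (f1 f2 : ℕ → ℕ) : Set ℕ :=
  {j | 1 ≤ j ∧ Even (f1 j) ∧ Odd (f2 j) ∧
    ((∃ Δ, IsIntervalS f1 Δ ∧ IsGreatest (Jset f1 Δ) j) ∨
     (∃ Δ, IsIntervalOE f2 Δ ∧ IsGreatest (Jset f2 Δ) j))}

/-- the sequence `ξ` -/
noncomputable def xi (f1 f2 : ℕ → ℕ) : ℕ → ℤ := fun j =>
  if j ∈ JplusSet f1 f2 then 1 else if j ∈ JminusSet f1 f2 then -1 else 0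

/-- partial sums of an integer-valued sequence indexed from 1 -/
def Sz (f : ℕ → ℤ) (k : ℕ) : ℤ := ∑ j ∈ Finset.Icc 1 k, f j

/-- `g` is the greatest orthogonal partition of `N` which is dominated by the
sequence `t` (used to define the Spaltenstein-type duality `d`). -/
def IsDualOf (g : ℕ → ℕ) (N : ℕ) (t : ℕ → ℕ) : Prop :=
  (IsPartition g N ∧ Orth g ∧ Dom g t) ∧
  ∀ ν, IsPartition ν N → Orth ν → Dom ν t → Dom ν g

/-- `g = d(f)` for `f` a symplectic partition of `2m`: the greatest orthogonal
partition of `2m+1` dominated by `^t(f ∪ (1))`. -/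
def IsSympDual (g : ℕ → ℕ) (m : ℕ) (f : ℕ → ℕ) : Prop :=
  IsDualOf g (2*m+1) (transpose (unionP f one1))

/-- `g = d(f)` for `f` an orthogonal partition of `2m`: the greatest orthogonal
partition of `2m` dominated by `^tf`. -/
def IsOrthDual (g : ℕ → ℕ) (m : ℕ) (f : ℕ → ℕ) : Prop :=
  IsDualOf g (2*m) (transpose f)

/-- `j` and `j+1` are `d`-linked (`d ∈ {1,2}`) -/
def LinkedStep (f : ℕ → ℕ) (τ : ℕ → ZMod 2) (d : ℕ) (j : ℕ) : Prop :=
  (f j = f (j+1) ∧ τ (f j) = (d : ZMod 2) + 1) ∨ (Odd j ∧ f (j+1) < f j)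

/-- `j` and `j'` (with `1 ≤ j ≤ j'`) are `d`-linked -/
def Linked (f : ℕ → ℕ) (τ : ℕ → ZMod 2) (d : ℕ) (j j' : ℕ) : Prop :=
  1 ≤ j ∧ j ≤ j' ∧ ∀ k, j ≤ k → k < j' → LinkedStep f τ d k

/-- the `d`-equivalence class of `j` -/
def ClassOf (f : ℕ → ℕ) (τ : ℕ → ZMod 2) (d j : ℕ) : Set ℕ :=
  {j' | Linked f τ d j j' ∨ Linked f τ d j' j}

/-- `C ∈ 𝔍nt_d`: a `d`-equivalence class with at least two elements -/
def IsBigClass (f : ℕ → ℕ) (τ : ℕ → ZMod 2) (d : ℕ) (C : Set ℕ) : Prop :=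
  (∃ j, 1 ≤ j ∧ C = ClassOf f τ d j) ∧ ∃ a ∈ C, ∃ b ∈ C, a ≠ b

/-!
A `d`-class is a maximal run of consecutive indices joined by `d`-steps. Beyond the last nonzero
part every step is a `1`-step (equal zero parts, `τ 0 = 0`) and none is a `2`-step, which gives (i).
A step at an even index `j` can only be `λ_j = λ_{j+1}` with `τ(λ_j) = d + 1`; as `λ` is
nonincreasing, this forces steps at the odd neighbours `j - 1` and `j + 1`, so no class starts at
an even index or ends at an odd one (ii). At an odd index the step holds for both `d` when
`λ_j > λ_{j+1}`, and otherwise for exactly the `d` with `τ(λ_j) = d + 1`; this gives (iii) and (iv).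
-/

section Linking

variable {f : ℕ → ℕ} {τ : ℕ → ZMod 2} {d : ℕ}

lemma linked_refl {j : ℕ} (hj : 1 ≤ j) : Linked f τ d j j :=
  ⟨hj, le_rfl, fun _ hk hk' => absurd (hk.trans_lt hk') (lt_irrefl _)⟩

lemma Linked.trans {i j k : ℕ} (h₁ : Linked f τ d i j) (h₂ : Linked f τ d j k) :
    Linked f τ d i k := by
  refine ⟨h₁.1, h₁.2.1.trans h₂.2.1, fun m hm hm' => ?_⟩
  rcases lt_or_ge m j with h | h
  · exact h₁.2.2 m hm h
  · exact h₂.2.2 m h hm'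

lemma linked_succ {a : ℕ} (ha : 1 ≤ a) (h : LinkedStep f τ d a) : Linked f τ d a (a + 1) :=
  ⟨ha, a.le_succ, fun k hk hk' => by rwa [show k = a by omega]⟩

lemma linked_or_linked_trans {x y z : ℕ}
    (hxy : Linked f τ d x y ∨ Linked f τ d y x) (hyz : Linked f τ d y z ∨ Linked f τ d z y) :
    Linked f τ d x z ∨ Linked f τ d z x := by
  rcases hxy with h₁ | h₁ <;> rcases hyz with h₂ | h₂
  · exact Or.inl (h₁.trans h₂)
  · rcases le_total x z with h | h
    · exact Or.inl ⟨h₁.1, h, fun k hk hk' => h₁.2.2 k hk (hk'.trans_le h₂.2.1)⟩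
    · exact Or.inr ⟨h₂.1, h, fun k hk hk' => h₂.2.2 k hk (hk'.trans_le h₁.2.1)⟩
  · rcases le_total x z with h | h
    · exact Or.inl ⟨h₁.1.trans h₁.2.1, h, fun k hk hk' => h₂.2.2 k (h₁.2.1.trans hk) hk'⟩
    · exact Or.inr ⟨h₂.1.trans h₂.2.1, h, fun k hk hk' => h₁.2.2 k (h₂.2.1.trans hk) hk'⟩
  · exact Or.inr (h₂.trans h₁)

lemma mem_classOf_self {j : ℕ} (hj : 1 ≤ j) : j ∈ ClassOf f τ d j :=
  Or.inl (linked_refl hj)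

lemma one_le_of_mem_classOf {j a : ℕ} (ha : a ∈ ClassOf f τ d j) : 1 ≤ a := by
  rcases ha with h | h
  · exact h.1.trans h.2.1
  · exact h.1

lemma classOf_eq_of_mem {j a : ℕ} (ha : a ∈ ClassOf f τ d j) :
    ClassOf f τ d a = ClassOf f τ d j := by
  ext x
  exact ⟨linked_or_linked_trans ha, linked_or_linked_trans ha.symm⟩

lemma linked_of_mem_classOf {j a b : ℕ} (ha : a ∈ ClassOf f τ d j) (hb : b ∈ ClassOf f τ d j)
    (hab : a ≤ b) : Linked f τ d a b := by
  rcases linked_or_linked_trans ha.symm hb with h | h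
  · exact h
  · obtain rfl := le_antisymm h.2.1 hab
    exact h

lemma linkedStep_of_mem_classOf {j a : ℕ} (ha : a ∈ ClassOf f τ d j)
    (ha' : a + 1 ∈ ClassOf f τ d j) : LinkedStep f τ d a :=
  (linked_of_mem_classOf ha ha' a.le_succ).2.2 a le_rfl a.lt_succ_self

lemma succ_mem_classOf {j a : ℕ} (ha : a ∈ ClassOf f τ d j) (h : LinkedStep f τ d a) :
    a + 1 ∈ ClassOf f τ d j := by
  rw [← classOf_eq_of_mem ha]
  exact Or.inl (linked_succ (one_le_of_mem_classOf ha) h)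

lemma mem_classOf_of_succ_mem {j a : ℕ} (ha : 1 ≤ a) (ha' : a + 1 ∈ ClassOf f τ d j)
    (h : LinkedStep f τ d a) : a ∈ ClassOf f τ d j := by
  rw [← classOf_eq_of_mem ha']
  exact Or.inr (linked_succ ha h)

lemma ordConnected_classOf (j : ℕ) : (ClassOf f τ d j).OrdConnected := by
  refine ⟨fun a ha b hb x hx => ?_⟩
  have hab := linked_of_mem_classOf ha hb (hx.1.trans hx.2)
  rw [← classOf_eq_of_mem ha]
  exact Or.inl ⟨hab.1, hx.1, fun k hk hk' => hab.2.2 k hk (hk'.trans_le hx.2)⟩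

lemma Ici_subset_classOf {m : ℕ} (hm : 1 ≤ m) (h : ∀ k, m ≤ k → LinkedStep f τ d k) :
    Set.Ici m ⊆ ClassOf f τ d m :=
  fun _ hx => Or.inl ⟨hm, hx, fun k hk _ => h k hk⟩

lemma isBigClass_classOf {a : ℕ} (ha : 1 ≤ a) (h : LinkedStep f τ d a) :
    IsBigClass f τ d (ClassOf f τ d a) :=
  ⟨⟨a, ha, rfl⟩, a, mem_classOf_self ha, a + 1, Or.inl (linked_succ ha h), by omega⟩

lemma exists_isBigClass_mem_succ_mem_iff {a : ℕ} :
    (∃ C, IsBigClass f τ d C ∧ a ∈ C ∧ a + 1 ∈ C) ↔ 1 ≤ a ∧ LinkedStep f τ d a := by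
  constructor
  · rintro ⟨C, ⟨⟨j, -, rfl⟩, -⟩, ha, ha'⟩
    exact ⟨one_le_of_mem_classOf ha, linkedStep_of_mem_classOf ha ha'⟩
  · rintro ⟨ha, h⟩
    exact ⟨_, isBigClass_classOf ha h, mem_classOf_self ha, Or.inl (linked_succ ha h)⟩

lemma IsBigClass.exists_isLeast {C : Set ℕ} (hC : IsBigClass f τ d C) :
    ∃ A, IsLeast C A ∧ C = ClassOf f τ d A ∧ LinkedStep f τ d A := by
  obtain ⟨⟨j, -, rfl⟩, a, ha, b, hb, hab⟩ := hC
  obtain ⟨hA, hAle⟩ := isLeast_csInf ⟨a, ha⟩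
  set A := sInf (ClassOf f τ d j)
  obtain ⟨c, hc, hAc⟩ : ∃ c ∈ ClassOf f τ d j, A < c := by
    rcases eq_or_ne a A with rfl | h
    · exact ⟨b, hb, (hAle hb).lt_of_ne hab⟩
    · exact ⟨a, ha, (hAle ha).lt_of_ne h.symm⟩
  have hA' : A + 1 ∈ ClassOf f τ d j := (ordConnected_classOf j).out hA hc ⟨by omega, hAc⟩
  exact ⟨A, ⟨hA, hAle⟩, (classOf_eq_of_mem hA).symm, linkedStep_of_mem_classOf hA hA'⟩

lemma finite_setOf_isBigClass {m : ℕ}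
    (h : ∀ C A, IsBigClass f τ d C → IsLeast C A → A ≤ m) :
    {C | IsBigClass f τ d C}.Finite := by
  refine ((Set.finite_Icc 1 m).image (ClassOf f τ d)).subset fun C hC => ?_
  obtain ⟨A, hA, rfl, -⟩ := hC.exists_isLeast
  exact ⟨A, ⟨one_le_of_mem_classOf hA.1, h _ A hC hA⟩, rfl⟩

lemma IsBigClass.isLeast_le_of_forall_linkedStep {C : Set ℕ} {A m : ℕ} (hC : IsBigClass f τ d C)
    (hA : IsLeast C A) (hm : 1 ≤ m) (h : ∀ k, m ≤ k → LinkedStep f τ d k) : A ≤ m := by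
  obtain ⟨A', hA', rfl, -⟩ := hC.exists_isLeast
  obtain rfl := hA.unique hA'
  by_contra! hmA
  obtain ⟨a, rfl⟩ : ∃ a, A = a + 1 := ⟨A - 1, by omega⟩
  have := hA.2 (mem_classOf_of_succ_mem (by omega) hA.1 (h a (by omega)))
  omega

lemma IsBigClass.isLeast_lt_of_forall_not_linkedStep {C : Set ℕ} {A m : ℕ}
    (hC : IsBigClass f τ d C) (hA : IsLeast C A) (h : ∀ k, m ≤ k → ¬ LinkedStep f τ d k) :
    A < m := by
  obtain ⟨A', hA', -, hstep⟩ := hC.exists_isLeast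
  obtain rfl := hA.unique hA'
  by_contra! hmA
  exact h A hmA hstep

lemma IsBigClass.finite_of_forall_not_linkedStep {C : Set ℕ} {m : ℕ} (hC : IsBigClass f τ d C)
    (h : ∀ k, m ≤ k → ¬ LinkedStep f τ d k) : C.Finite := by
  obtain ⟨A, hA, rfl, -⟩ := hC.exists_isLeast
  have hAm := hC.isLeast_lt_of_forall_not_linkedStep hA h
  refine (Set.finite_Iic m).subset fun x hx => Set.mem_Iic.2 <| not_lt.1 fun hmx => ?_
  have hconn := ordConnected_classOf (f := f) (τ := τ) (d := d) A
  exact h m le_rfl (linkedStep_of_mem_classOf (hconn.out hA.1 hx ⟨hAm.le, hmx.le⟩)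
    (hconn.out hA.1 hx ⟨by omega, hmx⟩))

lemma IsBigClass.eq_classOf_of_infinite {C : Set ℕ} {m : ℕ} (hC : IsBigClass f τ d C)
    (hinf : C.Infinite) (hm : 1 ≤ m) (h : ∀ k, m ≤ k → LinkedStep f τ d k) :
    C = ClassOf f τ d m := by
  obtain ⟨x, hx, hmx⟩ := hinf.exists_gt m
  obtain ⟨⟨j, -, rfl⟩, -⟩ := hC
  rw [← classOf_eq_of_mem hx, classOf_eq_of_mem (Ici_subset_classOf hm h hmx.le)]

lemma LinkedStep.eq_of_not_odd {j : ℕ} (h : LinkedStep f τ d j)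
    (hj : ¬ (Odd j ∧ f (j + 1) < f j)) : f j = f (j + 1) ∧ τ (f j) = d + 1 := by
  rcases h with h | h
  · exact h
  · exact absurd h hj

lemma linkedStep_of_odd {j : ℕ} (hj : Odd j) (hle : f (j + 1) ≤ f j)
    (hτ : τ (f j) = d + 1 ∨ τ (f (j + 1)) = d + 1) : LinkedStep f τ d j := by
  rcases hle.lt_or_eq with hlt | heq
  · exact Or.inr ⟨hj, hlt⟩
  · exact Or.inl ⟨heq.symm, by rwa [heq, or_self] at hτ⟩

lemma LinkedStep.pred_of_even {j : ℕ} (hf : ∀ j, 1 ≤ j → f (j + 1) ≤ f j) (hj : 1 ≤ j)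
    (heven : Even (j + 1)) (h : LinkedStep f τ d (j + 1)) : LinkedStep f τ d j :=
  linkedStep_of_odd (Nat.not_even_iff_odd.1 (Nat.even_add_one.1 heven)) (hf j hj)
    (Or.inr (h.eq_of_not_odd fun h' => Nat.not_odd_iff_even.2 heven h'.1).2)

lemma LinkedStep.succ_of_even {j : ℕ} (hf : ∀ j, 1 ≤ j → f (j + 1) ≤ f j) (hj : 1 ≤ j)
    (heven : Even j) (h : LinkedStep f τ d j) : LinkedStep f τ d (j + 1) := by
  obtain ⟨heq, hτ⟩ := h.eq_of_not_odd fun h' => Nat.not_odd_iff_even.2 heven h'.1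
  exact linkedStep_of_odd heven.add_one (hf (j + 1) (by omega)) (Or.inl (heq ▸ hτ))

lemma IsBigClass.odd_of_isLeast {C : Set ℕ} {A : ℕ} (hf : ∀ j, 1 ≤ j → f (j + 1) ≤ f j)
    (hC : IsBigClass f τ d C) (hA : IsLeast C A) : Odd A := by
  obtain ⟨A', hA', rfl, hstep⟩ := hC.exists_isLeast
  obtain rfl := hA.unique hA'
  by_contra hodd
  obtain ⟨a, rfl⟩ : ∃ a, A = a + 1 := ⟨A - 1, by have := one_le_of_mem_classOf hA.1; omega⟩
  have ha : 1 ≤ a := Nat.pos_of_ne_zero (by rintro rfl; exact hodd odd_one)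
  have := hA.2 (mem_classOf_of_succ_mem ha hA.1
    (hstep.pred_of_even hf ha (Nat.not_odd_iff_even.1 hodd)))
  omega

lemma IsBigClass.even_of_isGreatest {C : Set ℕ} {B : ℕ} (hf : ∀ j, 1 ≤ j → f (j + 1) ≤ f j)
    (hC : IsBigClass f τ d C) (hB : IsGreatest C B) : Even B := by
  obtain ⟨A, hA, rfl, -⟩ := hC.exists_isLeast
  obtain ⟨-, a, ha, b, hb, hab⟩ := hC
  have hAB : A < B := by
    have := hA.2 ha; have := hA.2 hb; have := hB.2 ha; have := hB.2 hb; omega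
  obtain ⟨c, rfl⟩ : ∃ c, B = c + 1 := ⟨B - 1, by omega⟩
  have hc : c ∈ ClassOf f τ d A := (ordConnected_classOf A).out hA.1 hB.1 ⟨by omega, by omega⟩
  have hc1 : 1 ≤ c := (one_le_of_mem_classOf hA.1).trans (by omega)
  by_contra heven
  have := hB.2 (succ_mem_classOf hB.1 ((linkedStep_of_mem_classOf hc hB.1).succ_of_even hf hc1
    (by simpa [Nat.even_add_one] using heven)))
  omega

lemma linkedStep_one_of_eq_zero (hτ0 : τ 0 = 0) {j : ℕ} (hj : f j = 0) (hj' : f (j + 1) = 0) :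
    LinkedStep f τ 1 j :=
  Or.inl ⟨hj.trans hj'.symm, by rw [hj, hτ0]; decide⟩

lemma not_linkedStep_two_of_eq_zero (hτ0 : τ 0 = 0) {j : ℕ} (hj : f j = 0) :
    ¬ LinkedStep f τ 2 j := by
  rintro (⟨-, h⟩ | ⟨-, h⟩)
  · rw [hj, hτ0] at h
    exact absurd h (by decide)
  · omega

lemma exists_isBigClass_mem_succ_mem_of_odd {p : ℕ} (hp : Odd p) (hle : f (p + 1) ≤ f p) :
    ∃ d, (d = 1 ∨ d = 2) ∧ ∃ C, IsBigClass f τ d C ∧ p ∈ C ∧ p + 1 ∈ C := by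
  simp only [exists_isBigClass_mem_succ_mem_iff]
  have hτ : ∀ x : ZMod 2, x = ((1 : ℕ) : ZMod 2) + 1 ∨ x = ((2 : ℕ) : ZMod 2) + 1 := by decide
  rcases hτ (τ (f p)) with h | h
  · exact ⟨1, Or.inl rfl, hp.pos, linkedStep_of_odd hp hle (Or.inl h)⟩
  · exact ⟨2, Or.inr rfl, hp.pos, linkedStep_of_odd hp hle (Or.inl h)⟩

lemma forall_isBigClass_mem_succ_mem_iff_of_odd {p : ℕ} (hp : Odd p) :
    (∀ d, (d = 1 ∨ d = 2) → ∃ C, IsBigClass f τ d C ∧ p ∈ C ∧ p + 1 ∈ C) ↔ f (p + 1) < f p := by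
  have hp1 : 1 ≤ p := hp.pos
  simp only [exists_isBigClass_mem_succ_mem_iff, or_imp, forall_and, forall_eq, hp1, true_and]
  refine ⟨fun ⟨h₁, h₂⟩ => ?_, fun hlt => ⟨Or.inr ⟨hp, hlt⟩, Or.inr ⟨hp, hlt⟩⟩⟩
  by_contra hlt
  have := (h₁.eq_of_not_odd (hlt ·.2)).2.symm.trans (h₂.eq_of_not_odd (hlt ·.2)).2
  exact absurd this (by decide)

lemma eq_of_isBigClass_mem_succ_mem_of_even {j d' : ℕ} (hj : Even j)
    (hd : d = 1 ∨ d = 2) (hd' : d' = 1 ∨ d' = 2)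
    (h : ∃ C, IsBigClass f τ d C ∧ j ∈ C ∧ j + 1 ∈ C)
    (h' : ∃ C, IsBigClass f τ d' C ∧ j ∈ C ∧ j + 1 ∈ C) : d = d' := by
  rw [exists_isBigClass_mem_succ_mem_iff] at h h'
  have hnot : ¬ (Odd j ∧ f (j + 1) < f j) := (Nat.not_odd_iff_even.2 hj ·.1)
  have := (h.2.eq_of_not_odd hnot).2.symm.trans (h'.2.eq_of_not_odd hnot).2
  rcases hd with rfl | rfl <;> rcases hd' with rfl | rfl <;>
    first | rfl | exact absurd this (by decide)

end Linking

theorem stmt16_general (n : ℕ) (f : ℕ → ℕ)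
    (hpart : IsPartition f (2*n))
    (τ : ℕ → ZMod 2) (hτ0 : τ 0 = 0) :
    -- (i)
    ({C | IsBigClass f τ 1 C}.Finite ∧ {C | IsBigClass f τ 2 C}.Finite ∧
      (∃! C, IsBigClass f τ 1 C ∧ C.Infinite) ∧
      (∀ C, IsBigClass f τ 2 C → C.Finite)) ∧
    -- (ii)
    (∀ d, (d = 1 ∨ d = 2) → ∀ C, IsBigClass f τ d C →
      (∃ j, IsLeast C j ∧ Odd j) ∧
      (C.Infinite ∨ ∃ j, IsGreatest C j ∧ Even j)) ∧
    -- (iii)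
    (∀ k, 1 ≤ k →
      (∃ d, (d = 1 ∨ d = 2) ∧ ∃ C, IsBigClass f τ d C ∧ 2*k - 1 ∈ C ∧ 2*k ∈ C) ∧
      ((∀ d, (d = 1 ∨ d = 2) → ∃ C, IsBigClass f τ d C ∧ 2*k - 1 ∈ C ∧ 2*k ∈ C)
        ↔ f (2*k) < f (2*k - 1))) ∧
    -- (iv)
    (∀ k, 1 ≤ k → ∀ d d', (d = 1 ∨ d = 2) → (d' = 1 ∨ d' = 2) →
      ∀ C C', IsBigClass f τ d C → IsBigClass f τ d' C' →
        2*k ∈ C → 2*k + 1 ∈ C → 2*k ∈ C' → 2*k + 1 ∈ C' → d = d') := by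
  have hf : ∀ j, 1 ≤ j → f (j + 1) ≤ f j := fun j hj => hpart.mono hj j.le_succ
  obtain ⟨M, hM⟩ := hpart.fin
  have hstep₁ : ∀ k, M + 1 ≤ k → LinkedStep f τ 1 k :=
    fun k hk => linkedStep_one_of_eq_zero hτ0 (hM k (by omega)) (hM (k + 1) (by omega))
  have hstep₂ : ∀ k, M + 1 ≤ k → ¬ LinkedStep f τ 2 k :=
    fun k hk => not_linkedStep_two_of_eq_zero hτ0 (hM k (by omega))
  refine ⟨⟨?_, ?_, ?_, fun C hC => hC.finite_of_forall_not_linkedStep hstep₂⟩, ?_, fun k hk => ?_,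
    fun k _ d d' hd hd' C C' hC hC' h₁ h₂ h₁' h₂' => eq_of_isBigClass_mem_succ_mem_of_even
      (even_two_mul k) hd hd' ⟨C, hC, h₁, h₂⟩ ⟨C', hC', h₁', h₂'⟩⟩
  · exact finite_setOf_isBigClass fun C A hC hA =>
      hC.isLeast_le_of_forall_linkedStep hA (by omega) hstep₁
  · exact finite_setOf_isBigClass fun C A hC hA =>
      (hC.isLeast_lt_of_forall_not_linkedStep hA hstep₂).le
  · refine ⟨ClassOf f τ 1 (M + 1), ⟨isBigClass_classOf (by omega) (hstep₁ _ le_rfl), ?_⟩,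
      fun C hC => hC.1.eq_classOf_of_infinite hC.2 (by omega) hstep₁⟩
    exact (Set.Ici_infinite _).mono (Ici_subset_classOf (by omega) hstep₁)
  · intro d _ C hC
    obtain ⟨A, hA, -⟩ := hC.exists_isLeast
    refine ⟨⟨A, hA, hC.odd_of_isLeast hf hA⟩, (Set.finite_or_infinite C).symm.imp id fun hfin => ?_⟩
    obtain ⟨B, hB⟩ := hfin.bddAbove.exists_isGreatest_of_nonempty ⟨A, hA.1⟩
    exact ⟨B, hB, hC.even_of_isGreatest hf hB⟩
  · have hodd : Odd (2 * k - 1) := ⟨k - 1, by omega⟩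
    rw [show 2 * k = 2 * k - 1 + 1 by omega, Nat.add_sub_cancel]
    exact ⟨exists_isBigClass_mem_succ_mem_of_odd hodd (hf _ hodd.pos),
      forall_isBigClass_mem_succ_mem_iff_of_odd hodd⟩

/-- Claims (3)–(6) in the proof of Proposition 1.11, about the `d`-linking
equivalence classes (`d ∈ {1,2}`). -/
theorem stmt16 (n : ℕ) (f : ℕ → ℕ)
    (hpart : IsPartition f (2*n)) (hsymp : Symp f)
    (heven : ∀ j, 1 ≤ j → Even (f j))
    (τ : ℕ → ZMod 2) (hτ0 : τ 0 = 0) (hτ1 : ∀ i, mult f i = 1 → τ i = 0) :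
    -- (i)
    ({C | IsBigClass f τ 1 C}.Finite ∧ {C | IsBigClass f τ 2 C}.Finite ∧
      (∃! C, IsBigClass f τ 1 C ∧ C.Infinite) ∧
      (∀ C, IsBigClass f τ 2 C → C.Finite)) ∧
    -- (ii)
    (∀ d, (d = 1 ∨ d = 2) → ∀ C, IsBigClass f τ d C →
      (∃ j, IsLeast C j ∧ Odd j) ∧
      (C.Infinite ∨ ∃ j, IsGreatest C j ∧ Even j)) ∧
    -- (iii)
    (∀ k, 1 ≤ k →
      (∃ d, (d = 1 ∨ d = 2) ∧ ∃ C, IsBigClass f τ d C ∧ 2*k - 1 ∈ C ∧ 2*k ∈ C) ∧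
      ((∀ d, (d = 1 ∨ d = 2) → ∃ C, IsBigClass f τ d C ∧ 2*k - 1 ∈ C ∧ 2*k ∈ C)
        ↔ f (2*k) < f (2*k - 1))) ∧
    -- (iv)
    (∀ k, 1 ≤ k → ∀ d d', (d = 1 ∨ d = 2) → (d' = 1 ∨ d' = 2) →
      ∀ C C', IsBigClass f τ d C → IsBigClass f τ d' C' →
        2*k ∈ C → 2*k + 1 ∈ C → 2*k ∈ C' → 2*k + 1 ∈ C' → d = d') :=
  stmt16_general n f hpart τ hτ0

end Wald
end

section
/- Let λ be an orthogonal partition of 2n+1, written with 2n+1 terms λ_1 ≥ … ≥ λ_{2n+1} ≥ 0. The 2n+1 integers λ_j + (2n+1−j), j = 1,…,2n+1, are pairwise distinct; exactly n of them are even, written 2z_1 > … > 2z_n, and exactly n+1 of them are odd, written 2z'_1+1 > … > 2z'_{n+1}+1. Moreover, for every k ∈ {1,…,2n+1}: Σ_{j=1}^{k} (λ_j + 2n+1−j) = 2(z'_1 + … + z'_{⌈k/2⌉}) + ⌈k/2⌉ + ν_k(λ) + 2(z_1 + … + z_{⌊k/2⌋}), where ν_k(λ) = 1 if λ_k is even and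 S_k(λ) + k is odd, and ν_k(λ) = 0 otherwise. -/
open Classical

open Finset

theorem Finset.eq_of_card_filter_le_eq {α : Type*} [LinearOrder α] {s : Finset α} {x y : α}
    (hx : x ∈ s) (hy : y ∈ s) (h : #{t ∈ s | x ≤ t} = #{t ∈ s | y ≤ t}) : x = y := by
  by_contra hne
  wlog hlt : x < y generalizing x y
  · exact this hy hx h.symm (Ne.symm hne) (lt_of_le_of_ne (not_lt.1 hlt) (Ne.symm hne))
  have hssub : {t ∈ s | y ≤ t} ⊂ {t ∈ s | x ≤ t} :=
    (ssubset_iff_of_subset (monotone_filter_right s fun _ _ hyt => hlt.le.trans hyt)).2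
      ⟨x, by simp [hx], by simp [hlt]⟩
  exact (card_lt_card hssub).ne' h

theorem card_filter_even_add_card_filter_odd (g : ℕ → ℕ) (s : Finset ℕ) :
    #{j ∈ s | Even (g j)} + #{j ∈ s | Odd (g j)} = #s := by
  simpa only [Nat.not_even_iff_odd] using
    card_filter_add_card_filter_not (s := s) (fun j => Even (g j))

theorem AntitoneOn.strictAntiOn_add_tsub {f : ℕ → ℕ} (hf : AntitoneOn f (Set.Ici 1)) (N : ℕ) :
    StrictAntiOn (fun j => f j + (N - j)) (Set.Icc 1 N) := by
  intro j hj k hk hjk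
  have hfkj := hf (Set.mem_Ici.2 hj.1) (Set.mem_Ici.2 hk.1) hjk.le
  have hkN := hk.2
  simp only
  omega

theorem StrictAntiOn.card_filter_le_image {μ : ℕ → ℕ} {s : Finset ℕ} {t : Set ℕ}
    (hμ : StrictAntiOn μ t) (hs : ↑s ⊆ t) {k : ℕ} (hk : k ∈ t) :
    #{x ∈ s.image μ | μ k ≤ x} = #{j ∈ s | j ≤ k} := by
  have himage : {x ∈ s.image μ | μ k ≤ x} = {j ∈ s | j ≤ k}.image μ := by
    ext x
    simp only [mem_filter, mem_image]
    constructor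
    · rintro ⟨⟨j, hj, rfl⟩, hle⟩
      exact ⟨j, ⟨hj, (hμ.le_iff_ge hk (hs hj)).1 hle⟩, rfl⟩
    · rintro ⟨j, ⟨hj, hle⟩, rfl⟩
      exact ⟨⟨j, hj, rfl⟩, (hμ.le_iff_ge hk (hs hj)).2 hle⟩
  rw [himage, card_image_of_injOn (hμ.injOn.mono ((coe_subset.2 (filter_subset _ s)).trans hs))]

section Enumeration

variable {μ ψ : ℕ → ℕ} {M m : ℕ} {p : ℕ → Prop} [DecidablePred p]

theorem image_subset_image_filter
    (hval : ∀ h ∈ Icc 1 m, ∃ j ∈ Icc 1 M, p j ∧ μ j = ψ h) :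
    (Icc 1 m).image ψ ⊆ {j ∈ Icc 1 M | p j}.image μ := by
  intro x hx
  obtain ⟨h, hh, rfl⟩ := mem_image.1 hx
  obtain ⟨j, hj, hpj, hμj⟩ := hval h hh
  exact mem_image.2 ⟨j, mem_filter.2 ⟨hj, hpj⟩, hμj⟩

theorem le_card_filter_of_enum (hψ : StrictAntiOn ψ (Set.Icc 1 m))
    (hval : ∀ h ∈ Icc 1 m, ∃ j ∈ Icc 1 M, p j ∧ μ j = ψ h) :
    m ≤ #{j ∈ Icc 1 M | p j} :=
  calc m = #((Icc 1 m).image ψ) := by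
        rw [card_image_of_injOn (by simpa using hψ.injOn), Nat.card_Icc, Nat.add_sub_cancel]
    _ ≤ #({j ∈ Icc 1 M | p j}.image μ) := card_le_card (image_subset_image_filter hval)
    _ ≤ #{j ∈ Icc 1 M | p j} := card_image_le

theorem eq_comp_card_filter_of_enum (hμ : StrictAntiOn μ (Set.Icc 1 M))
    (hψ : StrictAntiOn ψ (Set.Icc 1 m))
    (hval : ∀ h ∈ Icc 1 m, ∃ j ∈ Icc 1 M, p j ∧ μ j = ψ h) (hcard : #{j ∈ Icc 1 M | p j} = m)
    {k : ℕ} (hk : k ∈ Icc 1 M) (hpk : p k) :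
    μ k = ψ #{j ∈ Icc 1 k | p j} := by
  have hψinj : Set.InjOn ψ ↑(Icc 1 m) := by simpa using hψ.injOn
  have himage : (Icc 1 m).image ψ = {j ∈ Icc 1 M | p j}.image μ := by
    refine eq_of_subset_of_card_le (image_subset_image_filter hval) ?_
    rw [card_image_of_injOn hψinj, Nat.card_Icc, Nat.add_sub_cancel, ← hcard]
    exact card_image_le
  obtain ⟨hk1, hkM⟩ := mem_Icc.1 hk
  set c := #{j ∈ Icc 1 k | p j}
  have hprefix : {j ∈ {j ∈ Icc 1 M | p j} | j ≤ k} = {j ∈ Icc 1 k | p j} := by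
    ext j
    simp only [mem_filter, mem_Icc]
    exact ⟨fun ⟨⟨⟨h1, _⟩, hp⟩, h2⟩ => ⟨⟨h1, h2⟩, hp⟩,
      fun ⟨⟨h1, h2⟩, hp⟩ => ⟨⟨⟨h1, h2.trans hkM⟩, hp⟩, h2⟩⟩
  have hcmem : c ∈ Icc 1 m := mem_Icc.2
    ⟨card_pos.2 ⟨k, mem_filter.2 ⟨mem_Icc.2 ⟨hk1, le_rfl⟩, hpk⟩⟩,
      hcard ▸ card_le_card (hprefix ▸ filter_subset _ _)⟩
  refine eq_of_card_filter_le_eq (s := {j ∈ Icc 1 M | p j}.image μ)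
    (mem_image_of_mem μ (mem_filter.2 ⟨hk, hpk⟩)) (himage ▸ mem_image_of_mem ψ hcmem) ?_
  rw [hμ.card_filter_le_image (by simpa using coe_subset.2 (filter_subset p (Icc 1 M)))
      (by simpa using hk), hprefix, ← himage,
    hψ.card_filter_le_image (by simp) (by simpa using hcmem)]
  have hIcc : {j ∈ Icc 1 m | j ≤ c} = Icc 1 c := by
    ext j; simp only [mem_filter, mem_Icc]; have := (mem_Icc.1 hcmem).2; omega
  rw [hIcc, Nat.card_Icc, Nat.add_sub_cancel]

theorem card_filter_Icc_succ (k : ℕ) :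
    #{j ∈ Icc 1 (k + 1) | p j} = #{j ∈ Icc 1 k | p j} + if p (k + 1) then 1 else 0 := by
  rw [card_filter, card_filter, sum_Icc_succ_top (by omega)]

theorem sum_filter_eq_sum_Icc_card_of_enum
    (henum : ∀ k ∈ Icc 1 M, p k → μ k = ψ #{j ∈ Icc 1 k | p j}) {k : ℕ} (hk : k ≤ M) :
    ∑ j ∈ Icc 1 k with p j, μ j = ∑ h ∈ Icc 1 #{j ∈ Icc 1 k | p j}, ψ h := by
  induction k with
  | zero => simp
  | succ k ih =>
    rw [sum_filter, sum_Icc_succ_top (by omega), ← sum_filter, ih (by omega),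
      card_filter_Icc_succ]
    split_ifs with hpk
    · rw [sum_Icc_succ_top (by omega), henum (k + 1) (mem_Icc.2 ⟨by omega, hk⟩) hpk,
        card_filter_Icc_succ, if_pos hpk]
    · rfl

end Enumeration

section ParityEnumeration

variable {μ z z' : ℕ → ℕ} {M : ℕ}

theorem sum_Icc_eq_of_enum
    (hodd : ∀ k ∈ Icc 1 M, Odd (μ k) → μ k = 2 * z' #{j ∈ Icc 1 k | Odd (μ j)} + 1)
    (heven : ∀ k ∈ Icc 1 M, Even (μ k) → μ k = 2 * z #{j ∈ Icc 1 k | Even (μ j)})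
    {k : ℕ} (hk : k ≤ M) :
    ∑ j ∈ Icc 1 k, μ j = 2 * ∑ h ∈ Icc 1 #{j ∈ Icc 1 k | Odd (μ j)}, z' h
      + #{j ∈ Icc 1 k | Odd (μ j)} + 2 * ∑ h ∈ Icc 1 (k - #{j ∈ Icc 1 k | Odd (μ j)}), z h := by
  have hcount := card_filter_even_add_card_filter_odd μ (Icc 1 k)
  rw [Nat.card_Icc, Nat.add_sub_cancel] at hcount
  rw [show k - #{j ∈ Icc 1 k | Odd (μ j)} = #{j ∈ Icc 1 k | Even (μ j)} by omega,
    ← sum_filter_add_sum_filter_not (Icc 1 k) (fun j => Odd (μ j))]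
  simp only [Nat.not_odd_iff_even]
  rw [sum_filter_eq_sum_Icc_card_of_enum (ψ := fun h => 2 * z' h + 1) hodd hk,
    sum_filter_eq_sum_Icc_card_of_enum (ψ := fun h => 2 * z h) heven hk,
    sum_add_distrib, sum_const, Nat.card_Icc, Nat.add_sub_cancel, smul_eq_mul, mul_one, mul_sum,
    mul_sum]

/-- When the count of odd terms is off balance at `k` and balanced at `k + 1`, the consecutive
values `μ_k = μ_{k+1} + 1` are a `z'`-term and a `z`-term of the same size, which can trade
places in the balanced formula at the cost of `1`. -/
theorem sum_Icc_eq_of_enum_of_succ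
    (hodd : ∀ k ∈ Icc 1 M, Odd (μ k) → μ k = 2 * z' #{j ∈ Icc 1 k | Odd (μ j)} + 1)
    (heven : ∀ k ∈ Icc 1 M, Even (μ k) → μ k = 2 * z #{j ∈ Icc 1 k | Even (μ j)})
    {k : ℕ} (hk1 : 1 ≤ k) (hk : k + 1 ≤ M) (hstep : μ k = μ (k + 1) + 1)
    (hOk : #{j ∈ Icc 1 k | Odd (μ j)} + k % 2 = k / 2 + 1)
    (hOk1 : #{j ∈ Icc 1 (k + 1) | Odd (μ j)} = (k + 2) / 2) :
    ∑ j ∈ Icc 1 k, μ j = 2 * ∑ h ∈ Icc 1 ((k + 1) / 2), z' h + (k + 1) / 2 + 1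
      + 2 * ∑ h ∈ Icc 1 (k / 2), z h := by
  have hsum := sum_Icc_eq_of_enum hodd heven (by omega : k ≤ M)
  have hOsucc := card_filter_Icc_succ (p := fun j => Odd (μ j)) k
  have hcount := card_filter_even_add_card_filter_odd μ (Icc 1 k)
  have hcount1 := card_filter_even_add_card_filter_odd μ (Icc 1 (k + 1))
  rw [Nat.card_Icc, Nat.add_sub_cancel] at hcount hcount1
  obtain ⟨m, rfl | rfl⟩ := Nat.even_or_odd' k
  · obtain ⟨m, rfl⟩ : ∃ m', m = m' + 1 := ⟨m - 1, by omega⟩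
    have hnext : ¬Odd (μ (2 * (m + 1) + 1)) := fun h => by rw [if_pos h] at hOsucc; omega
    have hcur : Odd (μ (2 * (m + 1))) := hstep ▸ (Nat.not_odd_iff_even.1 hnext).add_one
    have hz' := hodd _ (mem_Icc.2 ⟨hk1, by omega⟩) hcur
    have hz := heven _ (mem_Icc.2 ⟨by omega, hk⟩) (Nat.not_odd_iff_even.1 hnext)
    rw [show #{j ∈ Icc 1 (2 * (m + 1)) | Odd (μ j)} = m + 1 + 1 by omega] at hz' hsum
    rw [show #{j ∈ Icc 1 (2 * (m + 1) + 1) | Even (μ j)} = m + 1 by omega] at hz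
    rw [hsum, show 2 * (m + 1) - (m + 1 + 1) = m by omega,
      show (2 * (m + 1) + 1) / 2 = m + 1 by omega, show 2 * (m + 1) / 2 = m + 1 by omega, sum_Icc_succ_top (by omega : 1 ≤ m + 1 + 1) z',
      sum_Icc_succ_top (by omega : 1 ≤ m + 1) z]
    omega
  · have hnext : Odd (μ (2 * m + 1 + 1)) := by
      by_contra h
      rw [if_neg h] at hOsucc
      omega
    have hcur : Even (μ (2 * m + 1)) := hstep ▸ hnext.add_one
    have hz := heven _ (mem_Icc.2 ⟨hk1, by omega⟩) hcur
    have hz' := hodd _ (mem_Icc.2 ⟨by omega, hk⟩) hnext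
    rw [show #{j ∈ Icc 1 (2 * m + 1) | Odd (μ j)} = m by omega] at hsum
    rw [show #{j ∈ Icc 1 (2 * m + 1) | Even (μ j)} = m + 1 by omega] at hz
    rw [show #{j ∈ Icc 1 (2 * m + 1 + 1) | Odd (μ j)} = m + 1 by omega] at hz'
    rw [hsum, show 2 * m + 1 - m = m + 1 by omega, show (2 * m + 1 + 1) / 2 = m + 1 by omega,
      show (2 * m + 1) / 2 = m by omega, sum_Icc_succ_top (by omega : 1 ≤ m + 1) z',
      sum_Icc_succ_top (by omega : 1 ≤ m + 1) z]
    omega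

end ParityEnumeration

namespace Wald

theorem IsPartition.antitoneOn {f : ℕ → ℕ} {N : ℕ} (hf : IsPartition f N) :
    AntitoneOn f (Set.Ici 1) :=
  fun _ hj _ _ hjk => hf.mono hj hjk

theorem IsPartition.eq_zero_of_lt {f : ℕ → ℕ} {N j : ℕ} (hf : IsPartition f N) (hj : N < j) :
    f j = 0 := by
  by_contra hfj
  obtain ⟨m, hm⟩ := hf.fin
  have hjm : j ≤ m := by
    by_contra hmj
    exact hfj (hm j (by omega))
  have hjS : j ≤ S f m :=
    calc j = ∑ _ ∈ Icc 1 j, 1 := by simp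
      _ ≤ ∑ i ∈ Icc 1 j, f i := sum_le_sum fun i hi => by
          have := hf.mono (mem_Icc.1 hi).1 (mem_Icc.1 hi).2
          omega
      _ ≤ S f m := sum_le_sum_of_subset (Icc_subset_Icc_right hjm)
  have := hf.total m hm
  omega

theorem IsPartition.S_eq {f : ℕ → ℕ} {N : ℕ} (hf : IsPartition f N) : S f N = N :=
  hf.total N fun _ => hf.eq_zero_of_lt

theorem odd_S_add_iff (f : ℕ → ℕ) (k : ℕ) :
    Odd (S f k + k) ↔ Odd #{j ∈ Icc 1 k | Even (f j)} := by
  have hS : Odd (S f k) ↔ Odd #{j ∈ Icc 1 k | Odd (f j)} := odd_sum_iff_odd_card_odd f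
  have hcount := card_filter_even_add_card_filter_odd f (Icc 1 k)
  rw [Nat.card_Icc, Nat.add_sub_cancel] at hcount
  revert hS hcount
  generalize #{j ∈ Icc 1 k | Odd (f j)} = a
  generalize #{j ∈ Icc 1 k | Even (f j)} = b
  simp only [Nat.odd_iff]
  omega

theorem IsPartition.even_card_filter_even {f : ℕ → ℕ} {n : ℕ} (hf : IsPartition f (2 * n + 1)) :
    Even #{j ∈ Icc 1 (2 * n + 1) | Even (f j)} := by
  rw [← Nat.not_odd_iff_even, ← odd_S_add_iff, hf.S_eq, Nat.not_odd_iff_even]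
  exact ⟨2 * n + 1, rfl⟩

theorem Orth.succ_eq_of_odd_card_filter_even {f : ℕ → ℕ} (hf : AntitoneOn f (Set.Ici 1))
    (horth : Orth f) {k : ℕ} (hk : Odd #{j ∈ Icc 1 k | Even (f j)}) :
    f (k + 1) = f k ∧ Even (f k) := by
  by_contra hpair
  -- so the whole level set of every even value met among `λ_1, …, λ_k` lies in `1..k`
  have hlt : ∀ j ∈ Icc 1 k, Even (f j) → f (k + 1) < f j := by
    intro j hj he
    obtain ⟨hj1, hjk⟩ := mem_Icc.1 hj
    have hk1 : f (k + 1) ≤ f k :=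
      hf (Set.mem_Ici.2 (hj1.trans hjk)) (Set.mem_Ici.2 (by omega)) (by omega)
    have hkj : f k ≤ f j := hf (Set.mem_Ici.2 hj1) (Set.mem_Ici.2 (hj1.trans hjk)) hjk
    refine lt_of_le_of_ne (hk1.trans hkj) fun heq => hpair ⟨by omega, ?_⟩
    rwa [show f k = f j by omega]
  set E := {j ∈ Icc 1 k | Even (f j)}
  have hfiber : ∀ v ∈ E.image f, Even #{j ∈ E | f j = v} := by
    intro v hv
    obtain ⟨j₀, hj₀, rfl⟩ := mem_image.1 hv
    obtain ⟨hj₀k, he⟩ := mem_filter.1 hj₀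
    have hgt := hlt j₀ hj₀k he
    have hlevel : {j | 1 ≤ j ∧ f j = f j₀} = ↑{j ∈ E | f j = f j₀} := by
      ext j
      simp only [Set.mem_ofPred_eq, coe_filter, E, mem_filter, mem_Icc]
      refine ⟨fun ⟨hj1, hfj⟩ => ⟨⟨⟨hj1, ?_⟩, hfj ▸ he⟩, hfj⟩,
        fun ⟨⟨⟨hj1, _⟩, _⟩, hfj⟩ => ⟨hj1, hfj⟩⟩
      by_contra hjk
      have := hf (Set.mem_Ici.2 (by omega : 1 ≤ k + 1)) (Set.mem_Ici.2 hj1) (by omega : k + 1 ≤ j)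
      omega
    have := horth (f j₀) he (by omega)
    rwa [mult, hlevel, Set.ncard_coe_finset] at this
  exact Nat.not_even_iff_odd.2 hk (card_eq_sum_card_image f E ▸ even_sum _ hfiber)

/-- For odd `N` the parity of `f j + (N - j)` is that of `f j + j + 1`; the count of odd ones is
`⌈k/2⌉`, corrected by `(-1)^k` when an even part of `f` is still waiting for its partner. -/
theorem Orth.card_filter_odd_add_tsub {f : ℕ → ℕ} (hf : AntitoneOn f (Set.Ici 1))
    (horth : Orth f) {N : ℕ} (hN : Odd N) {k : ℕ} (hk : k ≤ N) :
    (Even #{j ∈ Icc 1 k | Even (f j)} → #{j ∈ Icc 1 k | Odd (f j + (N - j))} = (k + 1) / 2) ∧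
    (Odd #{j ∈ Icc 1 k | Even (f j)} →
      #{j ∈ Icc 1 k | Odd (f j + (N - j))} + k % 2 = k / 2 + 1) := by
  induction k with
  | zero => simp
  | succ k ih =>
    have hpair := horth.succ_eq_of_odd_card_filter_even hf (k := k)
    have ih := ih (by omega)
    rw [card_filter_Icc_succ, card_filter_Icc_succ]
    simp only [Nat.even_iff, Nat.odd_iff] at hN hpair ih ⊢
    split_ifs <;> omega

theorem sum_Icc_add_tsub_eq_of_orth {n : ℕ} {f z z' : ℕ → ℕ} (hpart : IsPartition f (2 * n + 1))
    (horth : Orth f)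
    (hodd : ∀ k ∈ Icc 1 (2 * n + 1), Odd (f k + (2 * n + 1 - k)) →
      f k + (2 * n + 1 - k) = 2 * z' #{j ∈ Icc 1 k | Odd (f j + (2 * n + 1 - j))} + 1)
    (heven : ∀ k ∈ Icc 1 (2 * n + 1), Even (f k + (2 * n + 1 - k)) →
      f k + (2 * n + 1 - k) = 2 * z #{j ∈ Icc 1 k | Even (f j + (2 * n + 1 - j))})
    {k : ℕ} (hk1 : 1 ≤ k) (hk : k ≤ 2 * n + 1) :
    ∑ j ∈ Icc 1 k, (f j + (2 * n + 1 - j))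
      = 2 * (∑ h ∈ Icc 1 ((k + 1) / 2), z' h) + (k + 1) / 2
        + (if Even (f k) ∧ Odd (S f k + k) then 1 else 0)
        + 2 * (∑ h ∈ Icc 1 (k / 2), z h) := by
  have hf := hpart.antitoneOn
  have hN : Odd (2 * n + 1) := odd_two_mul_add_one n
  have hν : Even (f k) ∧ Odd (S f k + k) ↔ Odd #{j ∈ Icc 1 k | Even (f j)} := by
    rw [odd_S_add_iff]
    exact ⟨And.right, fun hW => ⟨(horth.succ_eq_of_odd_card_filter_even hf hW).2, hW⟩⟩
  rcases Nat.even_or_odd #{j ∈ Icc 1 k | Even (f j)} with hW | hW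
  · rw [if_neg (hν.not.2 (Nat.not_odd_iff_even.2 hW)), add_zero, sum_Icc_eq_of_enum hodd heven hk,
      (horth.card_filter_odd_add_tsub hf hN hk).1 hW, show k - (k + 1) / 2 = k / 2 by omega]
  · obtain ⟨hfk, hfke⟩ := horth.succ_eq_of_odd_card_filter_even hf hW
    have hk' : k + 1 ≤ 2 * n + 1 := by
      by_contra hlast
      obtain rfl : k = 2 * n + 1 := by omega
      exact Nat.not_even_iff_odd.2 hW hpart.even_card_filter_even
    have hW' : Even #{j ∈ Icc 1 (k + 1) | Even (f j)} := by
      rw [card_filter_Icc_succ, if_pos (hfk ▸ hfke)]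
      exact hW.add_one
    rw [if_pos (hν.2 hW)]
    exact sum_Icc_eq_of_enum_of_succ (μ := fun j => f j + (2 * n + 1 - j)) hodd heven hk1 hk'
      (by omega) ((horth.card_filter_odd_add_tsub hf hN hk).2 hW)
      ((horth.card_filter_odd_add_tsub hf hN hk').1 hW')

/-- Computations in the proof of Lemma 1.4: the `2n+1` numbers `λ_j + (2n+1-j)`
are pairwise distinct, `n` of them are even (`2z_1 > … > 2z_n`) and `n+1` odd
(`2z'_1+1 > … > 2z'_{n+1}+1`), and the partial sums satisfy formula (7). -/
theorem stmt17 (n : ℕ) (f : ℕ → ℕ)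
    (hpart : IsPartition f (2*n+1)) (horth : Orth f)
    (z z' : ℕ → ℕ)
    (hz : ∀ h1 h2, 1 ≤ h1 → h1 < h2 → h2 ≤ n → z h2 < z h1)
    (hz' : ∀ h1 h2, 1 ≤ h1 → h1 < h2 → h2 ≤ n + 1 → z' h2 < z' h1)
    (hzv : ∀ h, 1 ≤ h → h ≤ n →
      ∃ j, 1 ≤ j ∧ j ≤ 2*n+1 ∧ f j + (2*n+1 - j) = 2 * z h)
    (hz'v : ∀ h, 1 ≤ h → h ≤ n + 1 →
      ∃ j, 1 ≤ j ∧ j ≤ 2*n+1 ∧ f j + (2*n+1 - j) = 2 * z' h + 1) :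
    (∀ j k, 1 ≤ j → j < k → k ≤ 2*n+1 →
      f j + (2*n+1 - j) ≠ f k + (2*n+1 - k)) ∧
    ((Finset.Icc 1 (2*n+1)).filter (fun j => Even (f j + (2*n+1 - j)))).card = n ∧
    ((Finset.Icc 1 (2*n+1)).filter (fun j => Odd (f j + (2*n+1 - j)))).card = n + 1 ∧
    (∀ k, 1 ≤ k → k ≤ 2*n+1 →
      ∑ j ∈ Finset.Icc 1 k, (f j + (2*n+1 - j))
        = 2 * (∑ h ∈ Finset.Icc 1 ((k+1)/2), z' h) + (k+1)/2
          + (if Even (f k) ∧ Odd (S f k + k) then 1 else 0)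
          + 2 * (∑ h ∈ Finset.Icc 1 (k/2), z h)) := by
  have hμ := hpart.antitoneOn.strictAntiOn_add_tsub (2 * n + 1)
  have hψ : StrictAntiOn (fun h => 2 * z h) (Set.Icc 1 n) := fun a ha b hb hab => by
    simpa using hz a b ha.1 hab hb.2
  have hψ' : StrictAntiOn (fun h => 2 * z' h + 1) (Set.Icc 1 (n + 1)) := fun a ha b hb hab => by
    simpa using hz' a b ha.1 hab hb.2
  have hval : ∀ h ∈ Icc 1 n, ∃ j ∈ Icc 1 (2 * n + 1),
      Even (f j + (2 * n + 1 - j)) ∧ f j + (2 * n + 1 - j) = 2 * z h := fun h hh => by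
    obtain ⟨j, hj1, hj2, hj⟩ := hzv h (mem_Icc.1 hh).1 (mem_Icc.1 hh).2
    exact ⟨j, mem_Icc.2 ⟨hj1, hj2⟩, hj ▸ even_two_mul _, hj⟩
  have hval' : ∀ h ∈ Icc 1 (n + 1), ∃ j ∈ Icc 1 (2 * n + 1),
      Odd (f j + (2 * n + 1 - j)) ∧ f j + (2 * n + 1 - j) = 2 * z' h + 1 := fun h hh => by
    obtain ⟨j, hj1, hj2, hj⟩ := hz'v h (mem_Icc.1 hh).1 (mem_Icc.1 hh).2
    exact ⟨j, mem_Icc.2 ⟨hj1, hj2⟩, hj ▸ odd_two_mul_add_one _, hj⟩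
  have hcount := card_filter_even_add_card_filter_odd (fun j => f j + (2 * n + 1 - j))
    (Icc 1 (2 * n + 1))
  have hE := le_card_filter_of_enum hψ hval
  have hO := le_card_filter_of_enum hψ' hval'
  rw [Nat.card_Icc, Nat.add_sub_cancel] at hcount
  have hcardE : #{j ∈ Icc 1 (2 * n + 1) | Even (f j + (2 * n + 1 - j))} = n := by omega
  have hcardO : #{j ∈ Icc 1 (2 * n + 1) | Odd (f j + (2 * n + 1 - j))} = n + 1 := by omega
  refine ⟨fun j k hj hjk hk => (hμ ⟨hj, by omega⟩ ⟨by omega, hk⟩ hjk).ne', hcardE, hcardO,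
    fun k hk1 hk => sum_Icc_add_tsub_eq_of_orth hpart horth
      (fun k hk => eq_comp_card_filter_of_enum hμ hψ' hval' hcardO hk)
      (fun k hk => eq_comp_card_filter_of_enum hμ hψ hval hcardE hk) hk1 hk⟩

end Wald
end

section
/- Let λ be an orthogonal partition of 2n+1, written with 2n+1 terms λ_1 ≥ … ≥ λ_{2n+1} ≥ 0. Among the 2n+1 pairwise distinct integers λ_j + (2n+1−j), exactly n are even, written 2z_1 > … > 2z_n, and exactly n+1 are odd, written 2z'_1+1 > … > 2z'_{n+1}+1. Set a♯_h = z'_h + (n+1−h) for h = 1,…,n+1 and b♯_h = z_h + (n−h) for h = 1,…,n. Then a♯_1 ≥ b♯_1 ≥ a♯_2 ≥ b♯_2 ≥ … ≥ a♯_n ≥ b♯_n ≥ a♯_{n+1}. -/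
/-!
Write `β_j = λ_j + (2n+1-j)`. It is strictly decreasing, `β_j - β_{j+1} = 1` exactly when
`λ_j = λ_{j+1}`, and `β_j` is even iff `j + λ_j` is odd. Along a block of equal parts the parity
of `j + λ_j` alternates, and orthogonality gives blocks of equal even parts even length, so the
number `E(k)` of even `β_j` with `j ≤ k` is `⌊k/2⌋` at the end of every block and satisfies
`k - 2 ≤ 2 E(k) ≤ k + 1` everywhere. Since the `2 z_g` and the `2 z'_g + 1` are all the values
of `β`, `E(k)` and `k - E(k)` count the `z_g` and the `z'_g` whose value is at least `β_k`. At the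
position `k` of `2 z_h` one has `E(k) = h`, and these bounds at `k` and its neighbours, together
with `β_{k±1} = 2 z_h ∓ 1` inside a block, give `z_h ≤ z'_h + 1` and `z'_{h+1} ≤ z_h`.
-/

open Classical

namespace Wald

section
open Finset

theorem eq_filter_of_subset_of_card_le {α : Type*} {V A B : Finset α} {p : α → Prop}
    [DecidablePred p] (hA : A ⊆ V.filter p) (hB : B ⊆ V.filter (¬p ·)) (hcard : #V ≤ #A + #B) :
    A = V.filter p ∧ B = V.filter (¬p ·) := by
  have hsplit := card_filter_add_card_filter_not (s := V) p
  have hA' := card_le_card hA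
  have hB' := card_le_card hB
  exact ⟨eq_of_subset_of_card_le hA (by omega), eq_of_subset_of_card_le hB (by omega)⟩

section StrictAntiOn

variable {s : ℕ → ℕ} {m h : ℕ}

theorem card_filter_apply_le_eq (hs : StrictAntiOn s (Set.Icc 1 m)) (hh : h ∈ Set.Icc 1 m) :
    #{g ∈ Icc 1 m | s h ≤ s g} = h := by
  have : {g ∈ Icc 1 m | s h ≤ s g} = Icc 1 h := by
    ext g
    simp only [mem_filter, mem_Icc]
    constructor
    · rintro ⟨hg, hle⟩
      exact ⟨hg.1, (hs.le_iff_ge hh hg).1 hle⟩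
    · rintro ⟨hg1, hgh⟩
      exact ⟨⟨hg1, hgh.trans hh.2⟩, (hs.le_iff_ge hh ⟨hg1, hgh.trans hh.2⟩).2 hgh⟩
  rw [this, Nat.card_Icc, Nat.add_sub_cancel]

theorem le_card_filter_le_apply_iff (hs : StrictAntiOn s (Set.Icc 1 m)) (hh : h ∈ Set.Icc 1 m)
    (t : ℕ) : h ≤ #{g ∈ Icc 1 m | t ≤ s g} ↔ t ≤ s h := by
  constructor
  · intro hcard
    by_contra! hlt
    have hsub : {g ∈ Icc 1 m | t ≤ s g} ⊆ Icc 1 (h - 1) := by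
      intro g hg
      rw [mem_filter, mem_Icc] at hg
      have : g < h := by
        by_contra! hhg
        exact absurd (hs.antitoneOn hh hg.1 hhg) (by omega)
      exact mem_Icc.2 ⟨hg.1.1, by omega⟩
    have := card_le_card hsub
    rw [Nat.card_Icc] at this
    have := hh.1
    omega
  · intro ht
    have hsub : Icc 1 h ⊆ {g ∈ Icc 1 m | t ≤ s g} := by
      intro g hg
      rw [mem_Icc] at hg
      have hgm : g ∈ Set.Icc 1 m := ⟨hg.1, hg.2.trans hh.2⟩
      exact mem_filter.2 ⟨mem_Icc.2 hgm, ht.trans (hs.antitoneOn hgm hh hg.2)⟩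
    simpa using card_le_card hsub

theorem card_filter_Icc_eq_card_filter_le {N : ℕ} {d : ℕ → ℕ} {P : ℕ → Prop} [DecidablePred P]
    (hd : StrictAntiOn d (Set.Icc 1 N)) (hs : Set.InjOn s (Set.Icc 1 m))
    (himage : (Icc 1 m).image s = ((Icc 1 N).image d).filter P) {i : ℕ}
    (hi : i ∈ Set.Icc 1 N) :
    #{j ∈ Icc 1 i | P (d j)} = #{g ∈ Icc 1 m | d i ≤ s g} := by
  have hvalues : {j ∈ Icc 1 i | P (d j)}.image d = {g ∈ Icc 1 m | d i ≤ s g}.image s := by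
    ext v
    simp only [mem_image, mem_filter, mem_Icc]
    constructor
    · rintro ⟨j, ⟨hj, hP⟩, rfl⟩
      have hjN : j ∈ Set.Icc 1 N := ⟨hj.1, hj.2.trans hi.2⟩
      have : d j ∈ (Icc 1 m).image s := by
        rw [himage]
        exact mem_filter.2 ⟨mem_image_of_mem d (mem_Icc.2 hjN), hP⟩
      obtain ⟨g, hg, hgj⟩ := mem_image.1 this
      exact ⟨g, ⟨mem_Icc.1 hg, hgj ▸ hd.antitoneOn hjN hi hj.2⟩, hgj⟩
    · rintro ⟨g, ⟨hg, hig⟩, rfl⟩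
      have : s g ∈ ((Icc 1 N).image d).filter P := himage ▸ mem_image_of_mem s (mem_Icc.2 hg)
      obtain ⟨hsg, hP⟩ := mem_filter.1 this
      obtain ⟨j, hj, hjg⟩ := mem_image.1 hsg
      have hji : j ≤ i := by
        by_contra! hij
        exact absurd (hd hi (mem_Icc.1 hj) hij) (by omega)
      exact ⟨j, ⟨⟨(mem_Icc.1 hj).1, hji⟩, hjg ▸ hP⟩, hjg⟩
  have hdinj : Set.InjOn d ({j ∈ Icc 1 i | P (d j)} : Finset ℕ) := hd.injOn.mono fun j hj => by
    have := mem_Icc.1 (mem_filter.1 (mem_coe.1 hj)).1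
    exact ⟨this.1, this.2.trans hi.2⟩
  have hsinj : Set.InjOn s ({g ∈ Icc 1 m | d i ≤ s g} : Finset ℕ) :=
    hs.mono fun g hg => mem_Icc.1 (mem_filter.1 (mem_coe.1 hg)).1
  rw [← card_image_of_injOn hdinj, hvalues, card_image_of_injOn hsinj]

end StrictAntiOn

def beta (f : ℕ → ℕ) (N j : ℕ) : ℕ := f j + (N - j)

section Beta

variable {f : ℕ → ℕ}

theorem strictAntiOn_beta (hf : AntitoneOn f (Set.Ici 1)) (N : ℕ) :
    StrictAntiOn (beta f N) (Set.Icc 1 N) := by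
  rintro i ⟨hi1, -⟩ j ⟨hj1, hjN⟩ hij
  have := hf (Set.mem_Ici.2 hi1) (Set.mem_Ici.2 hj1) hij.le
  simp only [beta]
  omega

theorem even_beta_iff {N j : ℕ} (hN : Odd N) (hj : j ≤ N) :
    Even (beta f N j) ↔ Odd (j + f j) := by
  obtain ⟨r, rfl⟩ := hN
  simp only [beta, Nat.even_iff, Nat.odd_iff]
  omega

end Beta

def oddShiftCount (f : ℕ → ℕ) (k : ℕ) : ℕ := #{j ∈ Icc 1 k | Odd (j + f j)}

section OddShiftCount

variable {f : ℕ → ℕ}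

theorem oddShiftCount_zero : oddShiftCount f 0 = 0 := rfl

theorem oddShiftCount_succ (k : ℕ) :
    oddShiftCount f (k + 1) = oddShiftCount f k + if Odd (k + 1 + f (k + 1)) then 1 else 0 := by
  rw [oddShiftCount, oddShiftCount, ← insert_Icc_right_eq_Icc_add_one (by omega), filter_insert]
  split_ifs
  · exact card_insert_of_notMem (by simp)
  · rfl

theorem oddShiftCount_of_const {a k c : ℕ} (hak : a ≤ k)
    (hconst : ∀ j, a < j → j ≤ k → f j = c) :
    oddShiftCount f k = oddShiftCount f a + ((k + c + 1) / 2 - (a + c + 1) / 2) := by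
  induction k, hak using Nat.le_induction with
  | base => simp
  | succ k hak ih =>
    rw [oddShiftCount_succ, ih fun j hj hjk => hconst j hj (by omega),
      hconst (k + 1) (by omega) le_rfl]
    split_ifs with hodd <;> simp only [Nat.odd_iff] at hodd <;> omega

theorem exists_block_start (hf : AntitoneOn f (Set.Ici 1)) {k : ℕ} (hk : 1 ≤ k) :
    ∃ a < k, (∀ j, a < j → j ≤ k → f j = f k) ∧ (a = 0 ∨ f (a + 1) < f a) := by
  have hex : ∃ a, ∀ j, a < j → j ≤ k → f j = f k := ⟨k, fun j h1 h2 => by omega⟩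
  have hspec := Nat.find_spec hex
  refine ⟨Nat.find hex, ?_, hspec, ?_⟩
  · have := Nat.find_min' hex (m := k - 1) fun j h1 h2 => by rw [show j = k by omega]
    omega
  rcases Nat.eq_zero_or_pos (Nat.find hex) with h0 | hpos
  · exact Or.inl h0
  right
  have hfind_k : Nat.find hex < k := by
    have := Nat.find_min' hex (m := k - 1) fun j h1 h2 => by rw [show j = k by omega]
    omega
  rw [hspec _ (Nat.lt_succ_self _) hfind_k]
  refine lt_of_le_of_ne (hf (Set.mem_Ici.2 hpos) (Set.mem_Ici.2 hk) hfind_k.le) fun heq => ?_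
  refine Nat.find_min hex (Nat.sub_lt hpos one_pos) fun j h1 h2 => ?_
  rcases (show j = Nat.find hex ∨ Nat.find hex < j by omega) with rfl | hj
  · exact heq.symm
  · exact hspec j hj h2

theorem mult_eq_of_block (hf : AntitoneOn f (Set.Ici 1)) {a k : ℕ} (hak : a < k)
    (hblock : ∀ j, a < j → j ≤ k → f j = f k) (hstart : a = 0 ∨ f (a + 1) < f a)
    (hend : f (k + 1) < f k) : mult f (f k) = k - a := by
  have hset : {j | 1 ≤ j ∧ f j = f k} = ↑(Ioc a k) := by
    ext j
    simp only [Set.mem_ofPred_eq, coe_Ioc, Set.mem_Ioc]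
    constructor
    · rintro ⟨hj, hfj⟩
      constructor
      · by_contra! hja
        rcases hstart with rfl | hlt
        · omega
        have := hf (Set.mem_Ici.2 hj) (Set.mem_Ici.2 (hj.trans hja)) hja
        rw [hblock (a + 1) (by omega) (by omega)] at hlt
        omega
      · by_contra! hkj
        have := hf (Set.mem_Ici.2 (by omega : 1 ≤ k + 1)) (Set.mem_Ici.2 hj) hkj
        omega
    · rintro ⟨h1, h2⟩
      exact ⟨by omega, hblock j h1 h2⟩
  rw [mult, hset, Set.ncard_coe_finset, Nat.card_Ioc]

/-- Orthogonality gives every block of equal even parts even length. -/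
theorem oddShiftCount_eq_half (hf : AntitoneOn f (Set.Ici 1)) (horth : Orth f) {k : ℕ}
    (hk : k = 0 ∨ f (k + 1) < f k) : oddShiftCount f k = k / 2 := by
  induction k using Nat.strong_induction_on with
  | _ k ih =>
  rcases Nat.eq_zero_or_pos k with rfl | hk1
  · rfl
  have hdrop := hk.resolve_left hk1.ne'
  obtain ⟨a, hak, hblock, hstart⟩ := exists_block_start hf hk1
  have ha : oddShiftCount f a = a / 2 :=
    ih a hak (hstart.imp_right fun h => by rwa [hblock (a + 1) (by omega) (by omega)] at h ⊢)
  rw [oddShiftCount_of_const hak.le hblock, ha]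
  rcases Nat.even_or_odd (f k) with he | ho
  · have hlen := horth _ he (by omega)
    rw [mult_eq_of_block hf hak hblock hstart hdrop, Nat.even_iff] at hlen
    rw [Nat.even_iff] at he
    omega
  · rw [Nat.odd_iff] at ho
    omega

theorem oddShiftCount_bounds (hf : AntitoneOn f (Set.Ici 1)) (horth : Orth f) (k : ℕ) :
    k ≤ 2 * oddShiftCount f k + 2 ∧ 2 * oddShiftCount f k ≤ k + 1 := by
  rcases Nat.eq_zero_or_pos k with rfl | hk
  · simp [oddShiftCount_zero]
  obtain ⟨a, hak, hblock, hstart⟩ := exists_block_start hf hk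
  have ha : oddShiftCount f a = a / 2 := oddShiftCount_eq_half hf horth
    (hstart.imp_right fun h => by rwa [hblock (a + 1) (by omega) (by omega)] at h ⊢)
  rw [oddShiftCount_of_const hak.le hblock, ha]
  omega

end OddShiftCount

/-- Only membership of the listed values is required: as `d` takes `2n+1` distinct values on
`[1, 2n+1]`, counting shows they are all of its values (`IsParityEnumeration.image_eq`). -/
structure IsParityEnumeration (d : ℕ → ℕ) (n : ℕ) (z z' : ℕ → ℕ) : Prop where
  strictAntiOn_left : StrictAntiOn z (Set.Icc 1 n)
  strictAntiOn_right : StrictAntiOn z' (Set.Icc 1 (n + 1))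
  even_mem : ∀ h ∈ Icc 1 n, 2 * z h ∈ (Icc 1 (2 * n + 1)).image d
  odd_mem : ∀ h ∈ Icc 1 (n + 1), 2 * z' h + 1 ∈ (Icc 1 (2 * n + 1)).image d

namespace IsParityEnumeration

variable {d z z' : ℕ → ℕ} {n : ℕ}

theorem strictAntiOn_even (H : IsParityEnumeration d n z z') :
    StrictAntiOn (fun g => 2 * z g) (Set.Icc 1 n) := fun a ha b hb hab => by
  have := H.strictAntiOn_left ha hb hab
  simp only
  omega

theorem strictAntiOn_odd (H : IsParityEnumeration d n z z') :
    StrictAntiOn (fun g => 2 * z' g + 1) (Set.Icc 1 (n + 1)) := fun a ha b hb hab => by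
  have := H.strictAntiOn_right ha hb hab
  simp only
  omega

theorem image_eq (H : IsParityEnumeration d n z z') (hd : Set.InjOn d (Set.Icc 1 (2 * n + 1))) :
    (Icc 1 n).image (fun g => 2 * z g) = ((Icc 1 (2 * n + 1)).image d).filter Even ∧
      (Icc 1 (n + 1)).image (fun g => 2 * z' g + 1) =
        ((Icc 1 (2 * n + 1)).image d).filter (¬Even ·) := by
  apply eq_filter_of_subset_of_card_le
  · intro v hv
    obtain ⟨g, hg, rfl⟩ := mem_image.1 hv
    exact mem_filter.2 ⟨H.even_mem g hg, even_two_mul _⟩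
  · intro v hv
    obtain ⟨g, hg, rfl⟩ := mem_image.1 hv
    exact mem_filter.2 ⟨H.odd_mem g hg, Nat.not_even_two_mul_add_one _⟩
  · rw [card_image_of_injOn (by rwa [coe_Icc]),
      card_image_of_injOn (by rw [coe_Icc]; exact H.strictAntiOn_even.injOn),
      card_image_of_injOn (by rw [coe_Icc]; exact H.strictAntiOn_odd.injOn)]
    simp only [Nat.card_Icc]
    omega

theorem exists_eq_of_not_even (H : IsParityEnumeration d n z z')
    (hd : Set.InjOn d (Set.Icc 1 (2 * n + 1))) {i : ℕ} (hi : i ∈ Set.Icc 1 (2 * n + 1))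
    (hodd : ¬Even (d i)) : ∃ g ∈ Icc 1 (n + 1), 2 * z' g + 1 = d i := by
  have : d i ∈ (Icc 1 (n + 1)).image (fun g => 2 * z' g + 1) := by
    rw [(H.image_eq hd).2]
    exact mem_filter.2 ⟨mem_image_of_mem d (mem_Icc.2 hi), hodd⟩
  exact mem_image.1 this

variable {f : ℕ → ℕ}

theorem oddShiftCount_eq_card (hf : AntitoneOn f (Set.Ici 1))
    (H : IsParityEnumeration (beta f (2 * n + 1)) n z z') {i : ℕ}
    (hi : i ∈ Set.Icc 1 (2 * n + 1)) :
    oddShiftCount f i = #{g ∈ Icc 1 n | beta f (2 * n + 1) i ≤ 2 * z g} := by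
  have hd := strictAntiOn_beta hf (2 * n + 1)
  rw [← card_filter_Icc_eq_card_filter_le hd H.strictAntiOn_even.injOn (H.image_eq hd.injOn).1 hi,
    oddShiftCount]
  congr 1
  exact filter_congr fun j hj =>
    (even_beta_iff (odd_two_mul_add_one n) ((mem_Icc.1 hj).2.trans hi.2)).symm

theorem sub_oddShiftCount_eq_card (hf : AntitoneOn f (Set.Ici 1))
    (H : IsParityEnumeration (beta f (2 * n + 1)) n z z') {i : ℕ}
    (hi : i ∈ Set.Icc 1 (2 * n + 1)) :
    i - oddShiftCount f i = #{g ∈ Icc 1 (n + 1) | beta f (2 * n + 1) i ≤ 2 * z' g + 1} := by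
  have hd := strictAntiOn_beta hf (2 * n + 1)
  have hsplit :=
    card_filter_add_card_filter_not (s := Icc 1 i) (fun j => Even (beta f (2 * n + 1) j))
  rw [Nat.card_Icc,
    card_filter_Icc_eq_card_filter_le hd H.strictAntiOn_even.injOn (H.image_eq hd.injOn).1 hi,
    card_filter_Icc_eq_card_filter_le hd H.strictAntiOn_odd.injOn (H.image_eq hd.injOn).2 hi,
    ← oddShiftCount_eq_card hf H hi] at hsplit
  omega

variable {h : ℕ}

theorem le_add_one (hf : AntitoneOn f (Set.Ici 1)) (horth : Orth f)
    (H : IsParityEnumeration (beta f (2 * n + 1)) n z z') (hh : h ∈ Set.Icc 1 n) :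
    z h ≤ z' h + 1 := by
  obtain ⟨hh1, hhn⟩ := id hh
  obtain ⟨k, hk, hdk⟩ := mem_image.1 (H.even_mem h (mem_Icc.2 hh))
  rw [mem_Icc] at hk
  have hEk : oddShiftCount f k = h := by
    rw [oddShiftCount_eq_card hf H hk, hdk]
    exact card_filter_apply_le_eq H.strictAntiOn_even hh
  have hodd := le_card_filter_le_apply_iff H.strictAntiOn_odd
    (⟨hh1, by omega⟩ : h ∈ Set.Icc 1 (n + 1))
  simp only [beta] at hdk
  by_cases hrun : k < 2 * n + 1 ∧ f (k + 1) = f k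
  · -- `β_{k+1} = 2 z h - 1`, and at least `h` odd values lie above it
    obtain ⟨hkN, hfk⟩ := hrun
    have hk1 : k + 1 ∈ Set.Icc 1 (2 * n + 1) := ⟨by omega, hkN⟩
    have hE : oddShiftCount f (k + 1) = h := by
      rw [oddShiftCount_succ, hEk, if_neg (by rw [hfk, Nat.odd_iff]; omega), add_zero]
    have hO := sub_oddShiftCount_eq_card hf H hk1
    have hbound := (oddShiftCount_bounds hf horth k).2
    have := (hodd (beta f (2 * n + 1) (k + 1))).1 (by omega)
    simp only [beta] at this
    omega
  · have h2h : 2 * h ≤ k := by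
      rcases (show k = 2 * n + 1 ∨ f (k + 1) < f k by
          have := hf (Set.mem_Ici.2 hk.1) (Set.mem_Ici.2 (by omega : 1 ≤ k + 1)) k.le_succ
          omega) with hkN | hdrop
      · omega
      · have := oddShiftCount_eq_half hf horth (Or.inr hdrop)
        omega
    have hO := sub_oddShiftCount_eq_card hf H hk
    have := (hodd (beta f (2 * n + 1) k)).1 (by omega)
    simp only [beta] at this
    omega

theorem succ_le (hf : AntitoneOn f (Set.Ici 1)) (horth : Orth f)
    (H : IsParityEnumeration (beta f (2 * n + 1)) n z z') (hh : h ∈ Set.Icc 1 n) :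
    z' (h + 1) ≤ z h := by
  obtain ⟨hh1, hhn⟩ := id hh
  obtain ⟨k, hk, hdk⟩ := mem_image.1 (H.even_mem h (mem_Icc.2 hh))
  rw [mem_Icc] at hk
  have hEk : oddShiftCount f k = h := by
    rw [oddShiftCount_eq_card hf H hk, hdk]
    exact card_filter_apply_le_eq H.strictAntiOn_even hh
  simp only [beta] at hdk
  have hEk' : oddShiftCount f (k - 1) + 1 = h := by
    have := oddShiftCount_succ (f := f) (k - 1)
    rw [Nat.sub_add_cancel hk.1, hEk, if_pos (by rw [Nat.odd_iff]; omega)] at this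
    omega
  by_cases hrun : 2 ≤ k ∧ f (k - 1) = f k
  · -- `β_{k-1} = 2 z h + 1` is the `g`-th odd value, with `g ≤ h + 1`
    obtain ⟨hk2, hfk⟩ := hrun
    have hk1 : k - 1 ∈ Set.Icc 1 (2 * n + 1) := ⟨by omega, by omega⟩
    obtain ⟨g, hg, hgv⟩ := H.exists_eq_of_not_even (strictAntiOn_beta hf _).injOn hk1
      (by simp only [beta, Nat.even_iff]; omega)
    rw [mem_Icc] at hg
    have hO := sub_oddShiftCount_eq_card hf H hk1
    rw [← hgv, card_filter_apply_le_eq H.strictAntiOn_odd hg] at hO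
    have hbound := (oddShiftCount_bounds hf horth (k - 1)).1
    have := H.strictAntiOn_right.antitoneOn hg (⟨by omega, by omega⟩ : h + 1 ∈ Set.Icc 1 (n + 1))
      (show g ≤ h + 1 by omega)
    simp only [beta] at hgv
    omega
  · have hhalf : oddShiftCount f (k - 1) = (k - 1) / 2 := by
      refine oddShiftCount_eq_half hf horth ?_
      rw [Nat.sub_add_cancel hk.1]
      rcases Nat.lt_or_ge k 2 with hk2 | hk2
      · omega
      · have := hf (Set.mem_Ici.2 (by omega : 1 ≤ k - 1)) (Set.mem_Ici.2 hk.1) (Nat.sub_le k 1)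
        omega
    have hO := sub_oddShiftCount_eq_card hf H hk
    have := (le_card_filter_le_apply_iff H.strictAntiOn_odd
      (⟨by omega, by omega⟩ : h + 1 ∈ Set.Icc 1 (n + 1)) (beta f (2 * n + 1) k)).not.1 (by omega)
    simp only [beta] at this
    omega

end IsParityEnumeration

end

/-- Inequality (1) in the proof of Lemma 1.4: with `a♯_h = z'_h + (n+1-h)` and
`b♯_h = z_h + (n-h)`, one has `a♯_1 ≥ b♯_1 ≥ a♯_2 ≥ … ≥ b♯_n ≥ a♯_{n+1}`. -/
theorem stmt18 (n : ℕ) (f : ℕ → ℕ)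
    (hpart : IsPartition f (2*n+1)) (horth : Orth f)
    (z z' : ℕ → ℕ)
    (hz : ∀ h1 h2, 1 ≤ h1 → h1 < h2 → h2 ≤ n → z h2 < z h1)
    (hz' : ∀ h1 h2, 1 ≤ h1 → h1 < h2 → h2 ≤ n + 1 → z' h2 < z' h1)
    (hzv : ∀ h, 1 ≤ h → h ≤ n →
      ∃ j, 1 ≤ j ∧ j ≤ 2*n+1 ∧ f j + (2*n+1 - j) = 2 * z h)
    (hz'v : ∀ h, 1 ≤ h → h ≤ n + 1 →
      ∃ j, 1 ≤ j ∧ j ≤ 2*n+1 ∧ f j + (2*n+1 - j) = 2 * z' h + 1) :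
    ∀ h, 1 ≤ h → h ≤ n →
      z h + (n - h) ≤ z' h + (n + 1 - h) ∧
      z' (h+1) + (n + 1 - (h+1)) ≤ z h + (n - h) := by
  have hf : AntitoneOn f (Set.Ici 1) := fun j hj _ _ hjk => hpart.mono hj hjk
  have H : IsParityEnumeration (beta f (2 * n + 1)) n z z' := by
    refine ⟨fun a ha b hb hab => hz a b ha.1 hab hb.2, fun a ha b hb hab => hz' a b ha.1 hab hb.2,
      fun h hh => ?_, fun h hh => ?_⟩
    · obtain ⟨j, hj1, hjN, hj⟩ := hzv h (Finset.mem_Icc.1 hh).1 (Finset.mem_Icc.1 hh).2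
      exact Finset.mem_image.2 ⟨j, Finset.mem_Icc.2 ⟨hj1, hjN⟩, hj⟩
    · obtain ⟨j, hj1, hjN, hj⟩ := hz'v h (Finset.mem_Icc.1 hh).1 (Finset.mem_Icc.1 hh).2
      exact Finset.mem_image.2 ⟨j, Finset.mem_Icc.2 ⟨hj1, hjN⟩, hj⟩
  intro h hh1 hhn
  have h₁ := H.le_add_one hf horth ⟨hh1, hhn⟩
  have h₂ := H.succ_le hf horth ⟨hh1, hhn⟩
  omega

end Wald
end

section
/- Let (X,Y) be a pair of finite subsets of ℕ of rank N, and let d be an integer with d ≥ x for every x ∈ X ∪ Y. Set X' = {0,1,…,d} ∖ {d − y : y ∈ Y} and Y' = {0,1,…,d} ∖ {d − x : x ∈ X}. Then (X',Y') is a symbol of rank N whose defect equals the defect of (X,Y), and applying the same construction to (X',Y') with the same d yields back (X,Y). (Thus the duality (X,Y) ↦ (X',Y') on symbols of rank N preserves the defect and is involutive.) -/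
open Classical

namespace Wald

/-! The duality reflects a set `T ⊆ {0, …, d}` through `t ↦ d - t` and takes the complement
in `{0, …, d}`. Both operations are involutions and commute, so the duality is involutive. It
replaces the cardinalities `p, q` by `d + 1 - q, d + 1 - p`, which preserves the defect and
turns `s = p + q` into `2d + 2 - s`. Since `(2d + 1 - s)² = (s - 1)² + 4(d² - d(s - 1))`,
the floor term moves by exactly `d² - d(s - 1)`, and so does the sum of the entries. -/

open Finset

def reflCompl (d : ℕ) (T : Finset ℕ) : Finset ℕ := range (d + 1) \ T.image (fun t => d - t)

def symbolRank (X Y : Finset ℕ) : ℤ :=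
  (∑ x ∈ X, (x : ℤ)) + (∑ y ∈ Y, (y : ℤ)) - ((X.card + Y.card : ℤ) - 1) ^ 2 / 4

lemma image_tsub_left_subset_range (d : ℕ) (T : Finset ℕ) :
    T.image (fun t => d - t) ⊆ range (d + 1) := by
  intro a ha
  obtain ⟨t, -, rfl⟩ := mem_image.mp ha
  exact mem_range.mpr (by omega)

section reflCompl

variable {d : ℕ} {T : Finset ℕ}

lemma injOn_tsub_left (hT : ∀ t ∈ T, t ≤ d) : Set.InjOn (fun t => d - t) T := by
  intro a ha b hb hab
  have := hT a ha
  have := hT b hb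
  simp only at hab
  omega

lemma card_le_succ_of_forall_le (hT : ∀ t ∈ T, t ≤ d) : T.card ≤ d + 1 := by
  simpa using card_le_card fun t ht => mem_range.mpr (Nat.lt_succ_of_le (hT t ht))

lemma card_reflCompl (hT : ∀ t ∈ T, t ≤ d) :
    ((reflCompl d T).card : ℤ) = d + 1 - T.card := by
  rw [reflCompl, card_sdiff_of_subset (image_tsub_left_subset_range d T), card_range,
    card_image_of_injOn (injOn_tsub_left hT), Nat.cast_sub (card_le_succ_of_forall_le hT)]
  push_cast
  ring

lemma sum_reflCompl (hT : ∀ t ∈ T, t ≤ d) :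
    ∑ x ∈ reflCompl d T, (x : ℤ) =
      ∑ x ∈ range (d + 1), (x : ℤ) - (T.card * d - ∑ t ∈ T, (t : ℤ)) := by
  have hsplit := sum_sdiff (f := fun x : ℕ => (x : ℤ)) (image_tsub_left_subset_range d T)
  have himage : ∑ x ∈ T.image (fun t => d - t), (x : ℤ) = T.card * d - ∑ t ∈ T, (t : ℤ) := by
    rw [sum_image (injOn_tsub_left hT), sum_congr rfl fun t ht => Nat.cast_sub (hT t ht),
      sum_sub_distrib, sum_const, nsmul_eq_mul]
  rw [reflCompl]
  linarith

lemma reflCompl_reflCompl (hT : ∀ t ∈ T, t ≤ d) : reflCompl d (reflCompl d T) = T := by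
  ext a
  simp only [reflCompl, mem_sdiff, mem_image, mem_range, not_exists, not_and]
  constructor
  · rintro ⟨ha, h⟩
    by_contra haT
    refine h (d - a) ⟨by omega, fun t ht hta => ?_⟩ (by omega)
    have := hT t ht
    exact haT (show t = a by omega ▸ ht)
  · intro haT
    have := hT a haT
    exact ⟨by omega, fun y ⟨_, h⟩ hya => h a haT (by omega)⟩

end reflCompl

lemma two_mul_sum_range_id_int (n : ℕ) : 2 * ∑ x ∈ range (n + 1), (x : ℤ) = (n + 1) * n := by
  have h := sum_range_id_mul_two (n + 1)
  zify at h
  simpa [mul_comm] using h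

lemma symbolRank_reflCompl {d : ℕ} {X Y : Finset ℕ} (hX : ∀ x ∈ X, x ≤ d)
    (hY : ∀ y ∈ Y, y ≤ d) :
    symbolRank (reflCompl d Y) (reflCompl d X) = symbolRank X Y := by
  have hfloor : ((d + 1 - Y.card + (d + 1 - X.card) : ℤ) - 1) ^ 2 / 4 =
      ((X.card + Y.card : ℤ) - 1) ^ 2 / 4 + (d * d - d * ((X.card + Y.card : ℤ) - 1)) := by
    rw [← Int.add_mul_ediv_right _ _ (by norm_num : (4 : ℤ) ≠ 0)]
    ring_nf
  rw [symbolRank, symbolRank, sum_reflCompl hX, sum_reflCompl hY, card_reflCompl hX,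
    card_reflCompl hY, hfloor]
  linear_combination two_mul_sum_range_id_int d

lemma defect_reflCompl {d : ℕ} {X Y : Finset ℕ} (hX : ∀ x ∈ X, x ≤ d)
    (hY : ∀ y ∈ Y, y ≤ d) :
    (((reflCompl d Y).card : ℤ) - (reflCompl d X).card).natAbs =
      ((X.card : ℤ) - Y.card).natAbs := by
  rw [card_reflCompl hX, card_reflCompl hY]
  omega

/-- Section 1.2: the duality `(X,Y) ↦ (X',Y')` on symbols preserves the rank and
the defect, and is involutive. -/
theorem stmt19 (N : ℕ) (X Y : Finset ℕ)
    (hrank : (∑ x ∈ X, (x : ℤ)) + (∑ y ∈ Y, (y : ℤ))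
        - ((X.card + Y.card : ℤ) - 1)^2 / 4 = N)
    (d : ℕ) (hd : ∀ x ∈ X ∪ Y, x ≤ d)
    (X' Y' : Finset ℕ)
    (hX' : X' = Finset.range (d+1) \ Y.image (fun y => d - y))
    (hY' : Y' = Finset.range (d+1) \ X.image (fun x => d - x)) :
    ((∑ x ∈ X', (x : ℤ)) + (∑ y ∈ Y', (y : ℤ))
        - ((X'.card + Y'.card : ℤ) - 1)^2 / 4 = N) ∧
    ((X'.card : ℤ) - (Y'.card : ℤ)).natAbs = ((X.card : ℤ) - (Y.card : ℤ)).natAbs ∧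
    Finset.range (d+1) \ Y'.image (fun y => d - y) = X ∧
    Finset.range (d+1) \ X'.image (fun x => d - x) = Y := by
  have hX : ∀ x ∈ X, x ≤ d := fun x hx => hd x (mem_union_left Y hx)
  have hY : ∀ y ∈ Y, y ≤ d := fun y hy => hd y (mem_union_right X hy)
  subst hX' hY'
  exact ⟨(symbolRank_reflCompl hX hY).trans hrank, defect_reflCompl hX hY,
    reflCompl_reflCompl hX, reflCompl_reflCompl hY⟩

end Wald
end
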